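/- Let G be a topological group, Y a real locally convex space, and V ⊆ G an open subset. For k ≥ 1, compact sets K₁ ⊆ 𝔏(G)^k and K₂ ⊆ V, and a continuous seminorm |·| on Y, define q_{K₁,K₂}(f) := sup{|(D^R_{γ_k}⋯D^R_{γ₁}f)(x)| : (γ₁,…,γ_k) ∈ K₁, x ∈ K₂} for f ∈ C^∞(V,Y), together with f ↦ sup_{x∈K₂}|f(x)|. Then these seminorms are well defined on C^∞(V,Y) and determine the same locally convex topology on C^∞(V,Y) as the seminorms p_{K₁,K₂} built from the left directional derivatives D_γ. -/

import Mathlib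

open Filter Topology MeasureTheory
open scoped Topology

noncomputable section

/-- The set of continuous one-parameter subgroups of a topological group `G`,
topologized as a subspace of `C(ℝ, G)` (compact-open topology, i.e. topology of
uniform convergence on compact subsets of `ℝ`). -/
def OneParam (G : Type*) [TopologicalSpace G] [Group G] : Type _ :=
  {γ : C(ℝ, G) // ∀ t s : ℝ, γ (t + s) = γ t * γ s}

instance (G : Type*) [TopologicalSpace G] [Group G] : TopologicalSpace (OneParam G) :=
  inferInstanceAs (TopologicalSpace {γ : C(ℝ, G) // ∀ t s : ℝ, γ (t + s) = γ t * γ s})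

section DirDeriv

variable {G : Type*} [TopologicalSpace G] [Group G]
variable {Y : Type*} [TopologicalSpace Y] [AddCommGroup Y] [Module ℝ Y]

/-- `φ` has directional derivative `w` at `g` along the one-parameter subgroup `γ`:
`w = lim_{t → 0} (φ(g·γ(t)) - φ(g))/t`. -/
def HasDirDerivAt (φ : G → Y) (γ : OneParam G) (g : G) (w : Y) : Prop :=
  Tendsto (fun t : ℝ => t⁻¹ • (φ (g * γ.1 t) - φ g)) (𝓝[≠] (0 : ℝ)) (𝓝 w)

/-- The directional derivative `(D_γ φ)(g) = lim_{t → 0} (φ(g·γ(t)) - φ(g))/t`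
(junk value if the limit does not exist). -/
def dirDeriv (φ : G → Y) (γ : OneParam G) (g : G) : Y :=
  haveI : Nonempty Y := ⟨0⟩
  limUnder (𝓝[≠] (0 : ℝ)) (fun t : ℝ => t⁻¹ • (φ (g * γ.1 t) - φ g))

/-- The right directional derivative `(D^R_γ φ)(g) = lim_{t → 0} (φ(γ(-t)·g) - φ(g))/t`. -/
def rightDirDeriv (φ : G → Y) (γ : OneParam G) (g : G) : Y :=
  haveI : Nonempty Y := ⟨0⟩
  limUnder (𝓝[≠] (0 : ℝ)) (fun t : ℝ => t⁻¹ • (φ (γ.1 (-t) * g) - φ g))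

/-- Iterated directional derivatives: `iteratedD φ k γ g = (D_{γ k}(⋯(D_{γ 1} φ)⋯))(g)`,
with the innermost derivative taken along `γ 0`. -/
def iteratedD (φ : G → Y) : (k : ℕ) → (Fin k → OneParam G) → G → Y
  | 0, _ => φ
  | (k + 1), γ => dirDeriv (iteratedD φ k (fun i => γ i.castSucc)) (γ (Fin.last k))

/-- `φ ∈ C^∞(G, Y)`: `φ` is continuous and all of its iterated directional derivatives
exist everywhere and are jointly continuous. -/
def IsCSmooth (φ : G → Y) : Prop :=
  Continuous φ ∧ ∀ k : ℕ,
    (∀ (γ : Fin (k + 1) → OneParam G) (g : G),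
      HasDirDerivAt (iteratedD φ k (fun i => γ i.castSucc)) (γ (Fin.last k)) g
        (iteratedD φ (k + 1) γ g)) ∧
    Continuous (fun p : (Fin (k + 1) → OneParam G) × G => iteratedD φ (k + 1) p.1 p.2)

theorem IsCSmooth.continuous_iteratedD {φ : G → Y} (hφ : IsCSmooth φ) (k : ℕ) :
    Continuous (fun p : (Fin k → OneParam G) × G => iteratedD φ k p.1 p.2) := by
  cases k with
  | zero => exact hφ.1.comp continuous_snd
  | succ k => exact (hφ.2 k).2

end DirDeriv

/-- A continuous unitary representation of a topological group `G` on a complex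
Hilbert space `H`. -/
structure UnitaryRep (G : Type*) (H : Type*) [TopologicalSpace G] [Group G]
    [NormedAddCommGroup H] [InnerProductSpace ℂ H] where
  toFun : G → H →L[ℂ] H
  map_one' : toFun 1 = 1
  map_mul' : ∀ x y : G, toFun (x * y) = (toFun x).comp (toFun y)
  inner_map' : ∀ (x : G) (v w : H), (inner ℂ (toFun x v) (toFun x w) : ℂ) = inner ℂ v w
  surjective' : ∀ x : G, Function.Surjective (toFun x)
  continuous' : Continuous fun p : G × H => toFun p.1 p.2

namespace UnitaryRep

variable {G : Type*} [TopologicalSpace G] [Group G]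
variable {H : Type*} [NormedAddCommGroup H] [InnerProductSpace ℂ H]

/-- The space of smooth vectors `H_∞` of a representation. -/
def smoothVec (π : UnitaryRep G H) : Set H :=
  {v : H | IsCSmooth fun g : G => π.toFun g v}

/-- `dπ(γ)v = lim_{t → 0} (π(γ(t))v - v)/t`. -/
def dpi (π : UnitaryRep G H) (γ : OneParam G) (v : H) : H :=
  dirDeriv (fun g : G => π.toFun g v) γ 1

/-- The moment map `Ψ_π(v)(γ) = (1/i)⟨dπ(γ)v, v⟩/⟨v, v⟩`, viewed as an element of
`ℝ^{𝔏(G)}`. -/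
def momentMap (π : UnitaryRep G H) (v : H) : OneParam G → ℝ :=
  fun γ => ((inner ℂ v (π.dpi γ v) : ℂ) / (inner ℂ v v : ℂ) / Complex.I).re

/-- The image `I⁰_π = Ψ_π(H_∞ \ {0})` of the moment map. -/
def momentSet0 (π : UnitaryRep G H) : Set (OneParam G → ℝ) :=
  π.momentMap '' (π.smoothVec \ {0})

/-- The closed moment set `I_π`, the closure of `I⁰_π` in `ℝ^{𝔏(G)}` with the
topology of pointwise convergence. -/
def momentSet (π : UnitaryRep G H) : Set (OneParam G → ℝ) :=
  closure π.momentSet0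

end UnitaryRep

end
noncomputable section
open Filter Topology
open scoped Classical

section OnDefs

variable {G : Type*} [TopologicalSpace G] [Group G]
variable {Y : Type*} [TopologicalSpace Y] [AddCommGroup Y] [Module ℝ Y]

/-- The directional derivative `(D_γ φ)(g)` of a function on an open set `V ⊆ G`
(only values of `φ` on `V` matter; junk value if the limit does not exist). -/
def dirDerivOn (V : Set G) (φ : G → Y) (γ : OneParam G) (g : G) : Y :=
  haveI : Nonempty Y := ⟨0⟩
  limUnder (𝓝[≠] (0 : ℝ))
    (fun t : ℝ => if g * γ.1 t ∈ V then t⁻¹ • (φ (g * γ.1 t) - φ g) else 0)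

/-- The right directional derivative `(D^R_γ φ)(g) = lim_{t→0} (φ(γ(−t)g) − φ(g))/t`
of a function on an open set `V ⊆ G`. -/
def rightDirDerivOn (V : Set G) (φ : G → Y) (γ : OneParam G) (g : G) : Y :=
  haveI : Nonempty Y := ⟨0⟩
  limUnder (𝓝[≠] (0 : ℝ))
    (fun t : ℝ => if γ.1 (-t) * g ∈ V then t⁻¹ • (φ (γ.1 (-t) * g) - φ g) else 0)

/-- Iterated directional derivatives `(D_{γ k}⋯D_{γ 1}φ)` on `V`. -/
def iteratedDOn (V : Set G) (φ : G → Y) : (k : ℕ) → (Fin k → OneParam G) → G → Y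
  | 0, _ => φ
  | (k + 1), γ => dirDerivOn V (iteratedDOn V φ k (fun i => γ i.castSucc)) (γ (Fin.last k))

/-- Iterated right directional derivatives `(D^R_{γ k}⋯D^R_{γ 1}φ)` on `V`. -/
def iteratedRDOn (V : Set G) (φ : G → Y) : (k : ℕ) → (Fin k → OneParam G) → G → Y
  | 0, _ => φ
  | (k + 1), γ =>
      rightDirDerivOn V (iteratedRDOn V φ k (fun i => γ i.castSucc)) (γ (Fin.last k))

/-- `φ ∈ C^∞(V, Y)`: `φ` is continuous on `V` and all of its iterated directional
derivatives exist at every point of `V` and are jointly continuous on `𝔏(G)^k × V`. -/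
def IsCSmoothOn (V : Set G) (φ : G → Y) : Prop :=
  ContinuousOn φ V ∧ ∀ k : ℕ,
    (∀ (γ : Fin (k + 1) → OneParam G), ∀ g ∈ V,
      Tendsto (fun t : ℝ =>
          if g * (γ (Fin.last k)).1 t ∈ V then
            t⁻¹ • (iteratedDOn V φ k (fun i => γ i.castSucc) (g * (γ (Fin.last k)).1 t)
              - iteratedDOn V φ k (fun i => γ i.castSucc) g)
          else 0)
        (𝓝[≠] (0 : ℝ)) (𝓝 (iteratedDOn V φ (k + 1) γ g))) ∧
    ContinuousOn (fun p : (Fin (k + 1) → OneParam G) × G => iteratedDOn V φ (k + 1) p.1 p.2)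
      (Set.univ ×ˢ V)

/-- The seminorm `p_{K₁,K₂}(φ) = sup {ν((D_{γ k}⋯D_{γ 1}φ)(x)) : γ ∈ K₁, x ∈ K₂}` built
from left directional derivatives (for `k = 0` this is `sup_{x ∈ K₂} ν(φ(x))`). -/
def leftSemiOn (V : Set G) (k : ℕ) (K₁ : Set (Fin k → OneParam G)) (K₂ : Set G)
    (ν : Seminorm ℝ Y) (φ : G → Y) : ℝ :=
  sSup ((fun q : (Fin k → OneParam G) × G => ν (iteratedDOn V φ k q.1 q.2)) '' (K₁ ×ˢ K₂))

/-- The seminorm `q_{K₁,K₂}(φ) = sup {ν((D^R_{γ k}⋯D^R_{γ 1}φ)(x)) : γ ∈ K₁, x ∈ K₂}`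
built from right directional derivatives. -/
def rightSemiOn (V : Set G) (k : ℕ) (K₁ : Set (Fin k → OneParam G)) (K₂ : Set G)
    (ν : Seminorm ℝ Y) (φ : G → Y) : ℝ :=
  sSup ((fun q : (Fin k → OneParam G) × G => ν (iteratedRDOn V φ k q.1 q.2)) '' (K₁ ×ˢ K₂))

end OnDefs

/-! Writing `γ(-t) g = g · (g⁻¹ γ(-t) g)` turns a right derivative at `g` into a left derivative
along a conjugated one-parameter subgroup. By induction,
`D^R_{γ_k} ⋯ D^R_{γ_1} φ (g) = D_{μ_k} ⋯ D_{μ_1} φ (g)` with `μ = OneParam.rightToLeft g γ`,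
i.e. `μ_i(t) = g⁻¹ γ_{k+1-i}(-t) g`. In the inductive step the conjugating element moves with `t`,
and differentiating in `t` means exchanging two directional derivatives. This is a Schwarz lemma
for difference quotients with values in a locally convex space, proved via Hahn–Banach and the
scalar mean value theorem. Since `(γ, g) ↦ μ` is continuous with a continuous inverse, every
right seminorm is dominated by a left seminorm taken over a compact image, and conversely. -/

open Set

theorem abs_sub_sub_mul_le_of_hasDerivAt {h h' : ℝ → ℝ} {x y c M : ℝ}
    (hd : ∀ z ∈ uIcc x y, HasDerivAt h (h' z) z) (hM : ∀ z ∈ uIcc x y, |h' z - c| ≤ M) :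
    |h y - h x - (y - x) * c| ≤ M * |y - x| := by
  have := (convex_uIcc x y).norm_image_sub_le_of_norm_hasDerivWithin_le
    (f := fun z => h z - z * c) (f' := fun z => h' z - c)
    (fun z hz => ((hd z hz).sub (hasDerivAt_mul_const c)).hasDerivWithinAt)
    hM left_mem_uIcc right_mem_uIcc
  rw [Real.norm_eq_abs, Real.norm_eq_abs] at this
  convert this using 2
  ring

theorem abs_doubleDiff_sub_le {g g₂ g₁₂ : ℝ → ℝ → ℝ} {a b s t c M : ℝ}
    (h₂ : ∀ u ∈ uIcc a (a + s), ∀ v ∈ uIcc b (b + t), HasDerivAt (g u) (g₂ u v) v)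
    (h₁₂ : ∀ u ∈ uIcc a (a + s), ∀ v ∈ uIcc b (b + t), HasDerivAt (g₂ · v) (g₁₂ u v) u)
    (hM : ∀ u ∈ uIcc a (a + s), ∀ v ∈ uIcc b (b + t), |g₁₂ u v - c| ≤ M) :
    |g (a + s) (b + t) - g (a + s) b - g a (b + t) + g a b - s * t * c| ≤ M * |s| * |t| := by
  have hinner : ∀ v ∈ uIcc b (b + t), |g₂ (a + s) v - g₂ a v - s * c| ≤ M * |s| := by
    intro v hv
    simpa using abs_sub_sub_mul_le_of_hasDerivAt (fun u hu => h₁₂ u hu v hv)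
      (fun u hu => hM u hu v hv)
  have houter := abs_sub_sub_mul_le_of_hasDerivAt (h := fun v => g (a + s) v - g a v)
    (fun v hv => (h₂ _ right_mem_uIcc v hv).sub (h₂ _ left_mem_uIcc v hv)) hinner
  simp only [add_sub_cancel_left] at houter
  convert houter using 2
  ring

theorem eventually_abs_lt {r : ℝ} (hr : 0 < r) : ∀ᶠ s in 𝓝[≠] (0 : ℝ), |s| < r :=
  nhdsWithin_le_nhds (by simpa [Metric.ball, Real.dist_eq] using Metric.ball_mem_nhds (0 : ℝ) hr)

theorem Prod.dist_lt_of_mem_uIcc {a b s t u v δ : ℝ} (hs : |s| < δ) (ht : |t| < δ)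
    (hu : u ∈ uIcc a (a + s)) (hv : v ∈ uIcc b (b + t)) : dist (u, v) (a, b) < δ := by
  have hu' := abs_sub_left_of_mem_uIcc hu
  have hv' := abs_sub_left_of_mem_uIcc hv
  rw [add_sub_cancel_left] at hu' hv'
  rw [Prod.dist_eq, Real.dist_eq, Real.dist_eq]
  exact max_lt (hu'.trans_lt hs) (hv'.trans_lt ht)

theorem Real.sSup_le_sSup_of_subset {s t : Set ℝ} (hst : s ⊆ t) (ht : BddAbove t)
    (ht₀ : ∀ x ∈ t, 0 ≤ x) : sSup s ≤ sSup t :=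
  Real.sSup_le (fun _ hx => le_csSup ht (hst hx)) (Real.sSup_nonneg ht₀)

section SlopeLimit

variable {Y : Type*} [TopologicalSpace Y] [AddCommGroup Y] [Module ℝ Y]

def HasSlopeLimitAt (F : ℝ → Y) (w : Y) (t : ℝ) : Prop :=
  Tendsto (fun h : ℝ => h⁻¹ • (F (t + h) - F t)) (𝓝[≠] 0) (𝓝 w)

theorem HasSlopeLimitAt.hasDerivAt_comp {F : ℝ → Y} {w : Y} {t : ℝ} (h : HasSlopeLimitAt F w t)
    (ℓ : StrongDual ℝ Y) : HasDerivAt (fun x => ℓ (F x)) (ℓ w) t := by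
  rw [hasDerivAt_iff_tendsto_slope_zero]
  exact ((ℓ.continuous.tendsto w).comp h).congr fun h => by simp

theorem Seminorm.exists_strongDual_apply_eq [PolynormableSpace ℝ Y] {p : Seminorm ℝ Y}
    (hp : Continuous p) (x : Y) : ∃ ℓ : StrongDual ℝ Y, ℓ x = p x ∧ ∀ y, |ℓ y| ≤ p y := by
  by_cases hx : p x = 0
  · exact ⟨0, by simp [hx], fun y => by simp⟩
  have hx0 : x ≠ 0 := by rintro rfl; simp at hx
  let f := LinearPMap.mkSpanSingleton (K := ℝ) (L := ℝ) (σ := RingHom.id ℝ) x (p x) hx0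
  have hfp : ∀ z : f.domain, f.toFun z ≤ p z := by
    rintro ⟨z, hz⟩
    obtain ⟨c, rfl⟩ := Submodule.mem_span_singleton.1 hz
    rw [map_smul_eq_mul, Real.norm_eq_abs]
    exact (LinearPMap.mkSpanSingleton'_apply x (p x) _ c hz).trans_le
      (mul_le_mul_of_nonneg_right (le_abs_self c) (apply_nonneg p x))
  obtain ⟨ℓ, hℓf, hℓp⟩ := Module.Dual.exists_continuous_extension_of_le_seminorm_real
    f.domain f.toFun hp hfp
  refine ⟨ℓ, ?_, hℓp⟩
  rw [show x = ((⟨x, Submodule.mem_span_singleton_self x⟩ : f.domain) : Y) from rfl, hℓf]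
  exact LinearPMap.mkSpanSingleton_apply ℝ ℝ (σ := RingHom.id ℝ) hx0 (p x)

theorem Seminorm.doubleDiffQuot_sub_le [PolynormableSpace ℝ Y] {p : Seminorm ℝ Y}
    (hp : Continuous p) {f f₂ f₁₂ : ℝ → ℝ → Y} {a b s t M : ℝ} {w : Y} (hs : s ≠ 0) (ht : t ≠ 0)
    (h₂ : ∀ u ∈ uIcc a (a + s), ∀ v ∈ uIcc b (b + t), HasSlopeLimitAt (f u) (f₂ u v) v)
    (h₁₂ : ∀ u ∈ uIcc a (a + s), ∀ v ∈ uIcc b (b + t), HasSlopeLimitAt (f₂ · v) (f₁₂ u v) u)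
    (hM : ∀ u ∈ uIcc a (a + s), ∀ v ∈ uIcc b (b + t), p (f₁₂ u v - w) ≤ M) :
    p ((s * t)⁻¹ • (f (a + s) (b + t) - f (a + s) b - f a (b + t) + f a b) - w) ≤ M := by
  set Δ := f (a + s) (b + t) - f (a + s) b - f a (b + t) + f a b
  obtain ⟨ℓ, hℓx, hℓp⟩ := p.exists_strongDual_apply_eq hp (Δ - (s * t) • w)
  have hℓ := abs_doubleDiff_sub_le (g := fun u v => ℓ (f u v)) (c := ℓ w)
    (fun u hu v hv => (h₂ u hu v hv).hasDerivAt_comp ℓ)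
    (fun u hu v hv => (h₁₂ u hu v hv).hasDerivAt_comp ℓ)
    (fun u hu v hv => by rw [← map_sub]; exact (hℓp _).trans (hM u hu v hv))
  have hΔ : p (Δ - (s * t) • w) ≤ M * |s| * |t| := by
    rw [← hℓx]
    refine (le_abs_self _).trans (le_of_eq_of_le ?_ hℓ)
    simp only [Δ, map_sub, map_add, map_smul, smul_eq_mul]
  have hst : (s * t)⁻¹ • Δ - w = (s * t)⁻¹ • (Δ - (s * t) • w) := by
    rw [smul_sub, smul_smul, inv_mul_cancel₀ (mul_ne_zero hs ht), one_smul]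
  calc p ((s * t)⁻¹ • Δ - w) = |s * t|⁻¹ * p (Δ - (s * t) • w) := by
        rw [hst, map_smul_eq_mul, Real.norm_eq_abs, abs_inv]
    _ ≤ |s * t|⁻¹ * (M * |s| * |t|) := by gcongr
    _ = M := by
        rw [abs_mul]
        field_simp [abs_pos.2 hs, abs_pos.2 ht]

theorem hasSlopeLimitAt_of_mixed_partial [IsTopologicalAddGroup Y] [ContinuousSMul ℝ Y]
    [PolynormableSpace ℝ Y] {f f₂ f₁₂ : ℝ → ℝ → Y} {f₁ : ℝ → Y} {a b : ℝ}
    (h₁ : ∀ᶠ v in 𝓝 b, HasSlopeLimitAt (f · v) (f₁ v) a)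
    (h₂ : ∀ᶠ q in 𝓝 (a, b), HasSlopeLimitAt (f q.1) (f₂ q.1 q.2) q.2)
    (h₁₂ : ∀ᶠ q in 𝓝 (a, b), HasSlopeLimitAt (f₂ · q.2) (f₁₂ q.1 q.2) q.1)
    (hc : ContinuousAt (fun q : ℝ × ℝ => f₁₂ q.1 q.2) (a, b)) :
    HasSlopeLimitAt f₁ (f₁₂ a b) b := by
  rw [HasSlopeLimitAt, (PolynormableSpace.withSeminorms ℝ Y).tendsto_nhds]
  rintro ⟨p, hp⟩ ε hε
  set w := f₁₂ a b
  have hnear : ∀ᶠ q in 𝓝 (a, b), p (f₁₂ q.1 q.2 - w) < ε / 2 := by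
    refine (hp.continuousAt.comp (hc.sub continuousAt_const)).eventually_lt continuousAt_const ?_
    simpa [w] using half_pos hε
  obtain ⟨δ, hδ, hsquare⟩ := Metric.eventually_nhds_iff.1 (h₂.and (h₁₂.and hnear))
  obtain ⟨δ', hδ', hline⟩ := Metric.eventually_nhds_iff.1 h₁
  have hquot : ∀ t : ℝ, t ≠ 0 → |t| < δ → |t| < δ' →
      p (t⁻¹ • (f₁ (b + t) - f₁ b) - w) ≤ ε / 2 := by
    intro t ht htδ htδ'
    have hlim : Tendsto (fun s : ℝ => (s * t)⁻¹ • (f (a + s) (b + t) - f (a + s) b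
          - f a (b + t) + f a b)) (𝓝[≠] 0) (𝓝 (t⁻¹ • (f₁ (b + t) - f₁ b))) := by
      refine (((hline (by simpa [Real.dist_eq] using htδ')).sub
        (hline (by simpa using hδ'))).const_smul t⁻¹).congr fun s => ?_
      rw [mul_inv_rev, mul_smul, ← smul_sub]
      congr 2
      abel
    -- let `s → 0` in the estimate of the double difference quotient, uniform in small `s`
    refine le_of_tendsto ((hp.tendsto _).comp (hlim.sub_const w)) ?_
    filter_upwards [self_mem_nhdsWithin, eventually_abs_lt hδ] with s hs hsδ
    exact p.doubleDiffQuot_sub_le hp hs ht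
      (fun u hu v hv => (hsquare (Prod.dist_lt_of_mem_uIcc hsδ htδ hu hv)).1)
      (fun u hu v hv => (hsquare (Prod.dist_lt_of_mem_uIcc hsδ htδ hu hv)).2.1)
      (fun u hu v hv => (hsquare (Prod.dist_lt_of_mem_uIcc hsδ htδ hu hv)).2.2.le)
  filter_upwards [self_mem_nhdsWithin, eventually_abs_lt (lt_min hδ hδ')] with t ht htδ
  exact (hquot t ht (htδ.trans_le (min_le_left _ _)) (htδ.trans_le (min_le_right _ _))).trans_lt
    (half_lt_self hε)

end SlopeLimit

namespace OneParam

variable {G : Type*} [TopologicalSpace G] [Group G]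

@[ext]
theorem ext {γ δ : OneParam G} (h : ∀ t, γ.1 t = δ.1 t) : γ = δ :=
  Subtype.ext (ContinuousMap.ext h)

theorem map_zero (γ : OneParam G) : γ.1 0 = 1 := by
  simpa using γ.2 0 0

theorem continuous_uncurry : Continuous fun q : OneParam G × ℝ => q.1.1 q.2 :=
  ContinuousEval.continuous_eval.comp
    ((continuous_subtype_val.comp continuous_fst).prodMk continuous_snd)

def reverse (γ : OneParam G) : OneParam G :=
  ⟨⟨fun t => γ.1 (-t), by fun_prop⟩, fun t s => by simp only [ContinuousMap.coe_mk, neg_add, γ.2]⟩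

@[simp]
theorem reverse_apply (γ : OneParam G) (t : ℝ) : γ.reverse.1 t = γ.1 (-t) := rfl

theorem continuous_reverse : Continuous (reverse : OneParam G → OneParam G) :=
  (ContinuousMap.continuous_of_continuous_uncurry (fun γ : OneParam G => γ.reverse.1)
    (continuous_uncurry.comp (continuous_fst.prodMk continuous_snd.neg))).subtype_mk _

variable [IsTopologicalGroup G]

def conj (γ : OneParam G) (x : G) : OneParam G :=
  ⟨⟨fun t => x⁻¹ * γ.1 t * x, by fun_prop⟩, fun t s => by
    simp only [ContinuousMap.coe_mk, γ.2]
    group⟩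

@[simp]
theorem conj_apply (γ : OneParam G) (x : G) (t : ℝ) : (γ.conj x).1 t = x⁻¹ * γ.1 t * x := rfl

@[simp]
theorem conj_one (γ : OneParam G) : γ.conj 1 = γ := by
  ext t
  simp

theorem conj_mul (γ : OneParam G) (x y : G) : γ.conj (x * y) = (γ.conj x).conj y := by
  ext t
  simp only [conj_apply, mul_inv_rev]
  group

theorem mul_mul_conj_apply (γ : OneParam G) (x y : G) (t : ℝ) :
    x * y * (γ.conj y).1 t = x * γ.1 t * y := by
  simp only [conj_apply]
  group

theorem continuous_conj : Continuous fun q : OneParam G × G => q.1.conj q.2 :=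
  (ContinuousMap.continuous_of_continuous_uncurry (fun q : OneParam G × G => (q.1.conj q.2).1)
    ((continuous_snd.comp continuous_fst).inv.mul
      (continuous_uncurry.comp (continuous_fst.fst.prodMk continuous_snd)) |>.mul
      (continuous_snd.comp continuous_fst))).subtype_mk _

def rightToLeft {k : ℕ} (g : G) (γ : Fin k → OneParam G) : Fin k → OneParam G :=
  fun i => (γ i.rev).reverse.conj g

theorem continuous_rightToLeft {k : ℕ} :
    Continuous fun q : (Fin k → OneParam G) × G => rightToLeft q.2 q.1 :=
  continuous_pi fun i => continuous_conj.comp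
    ((continuous_reverse.comp ((continuous_apply i.rev).comp continuous_fst)).prodMk
      continuous_snd)

theorem continuous_rightToLeft_inv {k : ℕ} :
    Continuous fun q : (Fin k → OneParam G) × G => rightToLeft q.2⁻¹ q.1 :=
  continuous_rightToLeft.comp (continuous_fst.prodMk continuous_snd.inv)

theorem rightToLeft_rightToLeft_inv {k : ℕ} (g : G) (μ : Fin k → OneParam G) :
    rightToLeft g (rightToLeft g⁻¹ μ) = μ := by
  funext i
  ext t
  simp only [rightToLeft, conj_apply, reverse_apply, inv_inv, neg_neg, Fin.rev_rev]
  group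

theorem rightToLeft_mul {k : ℕ} (g h : G) (γ : Fin k → OneParam G) :
    rightToLeft (g * h) γ = fun i => (rightToLeft g γ i).conj h :=
  funext fun _ => conj_mul _ g h

theorem rightToLeft_succ {k : ℕ} (g : G) (γ : Fin (k + 1) → OneParam G) :
    rightToLeft g γ =
      Fin.cons ((γ (Fin.last k)).reverse.conj g) (rightToLeft g fun i => γ i.castSucc) := by
  funext i
  induction i using Fin.cases <;> simp [rightToLeft, Fin.rev_succ]

end OneParam

theorem Fin.init_cons {n : ℕ} {α : Type*} (x : α) (μ : Fin (n + 1) → α) :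
    (fun i : Fin (n + 1) => (Fin.cons x μ : Fin (n + 2) → α) i.castSucc) =
      Fin.cons x fun i : Fin n => μ i.castSucc := by
  funext i
  induction i using Fin.cases <;> simp

section Iterated

variable {G : Type*} [TopologicalSpace G] [Group G]
variable {Y : Type*} [TopologicalSpace Y] [AddCommGroup Y] [Module ℝ Y]
variable {V : Set G}

theorem iteratedDOn_succ (φ : G → Y) {k : ℕ} (γ : Fin (k + 1) → OneParam G) :
    iteratedDOn V φ (k + 1) γ =
      dirDerivOn V (iteratedDOn V φ k fun i => γ i.castSucc) (γ (Fin.last k)) := rfl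

theorem iteratedDOn_cons (φ : G → Y) (η : OneParam G) :
    ∀ {k : ℕ} (μ : Fin k → OneParam G),
      iteratedDOn V φ (k + 1) (Fin.cons η μ) = iteratedDOn V (dirDerivOn V φ η) k μ
  | 0, _ => rfl
  | k + 1, μ => by
    rw [iteratedDOn_succ φ (Fin.cons η μ), iteratedDOn_succ _ μ, Fin.init_cons, Fin.cons_last,
      iteratedDOn_cons]

end Iterated

namespace IsCSmoothOn

variable {G : Type*} [TopologicalSpace G] [Group G]
variable {Y : Type*} [TopologicalSpace Y] [AddCommGroup Y] [Module ℝ Y]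
variable {V : Set G} {φ : G → Y}

theorem continuousOn_iteratedDOn (hφ : IsCSmoothOn V φ) (k : ℕ) :
    ContinuousOn (fun q : (Fin k → OneParam G) × G => iteratedDOn V φ k q.1 q.2)
      (Set.univ ×ˢ V) := by
  cases k with
  | zero => exact hφ.1.comp continuousOn_snd fun q hq => hq.2
  | succ k => exact (hφ.2 k).2

section Subtraction

variable [IsTopologicalAddGroup Y] {φ₁ φ₂ : G → Y}

theorem tendsto_leftQuot_sub (h₁ : IsCSmoothOn V φ₁) (h₂ : IsCSmoothOn V φ₂) {k : ℕ}
    (hk : ∀ (μ : Fin k → OneParam G) (g : G), g ∈ V →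
      iteratedDOn V (φ₁ - φ₂) k μ g = iteratedDOn V φ₁ k μ g - iteratedDOn V φ₂ k μ g)
    (μ : Fin (k + 1) → OneParam G) {g : G} (hg : g ∈ V) :
    Tendsto (fun t : ℝ =>
        if g * (μ (Fin.last k)).1 t ∈ V then
          t⁻¹ • (iteratedDOn V (φ₁ - φ₂) k (fun i => μ i.castSucc) (g * (μ (Fin.last k)).1 t)
            - iteratedDOn V (φ₁ - φ₂) k (fun i => μ i.castSucc) g)
        else 0)
      (𝓝[≠] 0) (𝓝 (iteratedDOn V φ₁ (k + 1) μ g - iteratedDOn V φ₂ (k + 1) μ g)) := by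
  refine (((h₁.2 k).1 μ g hg).sub ((h₂.2 k).1 μ g hg)).congr fun t => ?_
  split_ifs with ht
  · rw [hk _ _ ht, hk _ _ hg, ← smul_sub]
    congr 1
    abel
  · exact sub_zero 0

theorem iteratedDOn_sub [T2Space Y] (h₁ : IsCSmoothOn V φ₁) (h₂ : IsCSmoothOn V φ₂) :
    ∀ {k : ℕ} (μ : Fin k → OneParam G) (g : G), g ∈ V →
      iteratedDOn V (φ₁ - φ₂) k μ g = iteratedDOn V φ₁ k μ g - iteratedDOn V φ₂ k μ g
  | 0, _, _, _ => rfl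
  | _ + 1, μ, _, hg => (h₁.tendsto_leftQuot_sub h₂ (h₁.iteratedDOn_sub h₂) μ hg).limUnder_eq

theorem sub [T2Space Y] (h₁ : IsCSmoothOn V φ₁) (h₂ : IsCSmoothOn V φ₂) :
    IsCSmoothOn V (φ₁ - φ₂) := by
  refine ⟨h₁.1.sub h₂.1, fun k => ⟨fun μ g hg => ?_, ?_⟩⟩
  · rw [h₁.iteratedDOn_sub h₂ μ g hg]
    exact h₁.tendsto_leftQuot_sub h₂ (h₁.iteratedDOn_sub h₂) μ hg
  · refine ((h₁.2 k).2.sub (h₂.2 k).2).congr ?_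
    rintro ⟨μ, g⟩ ⟨-, hg⟩
    exact h₁.iteratedDOn_sub h₂ μ g hg

end Subtraction

section RightDerivatives

variable [IsTopologicalGroup G]

open OneParam

theorem hasSlopeLimitAt_iteratedDOn (hV : IsOpen V)
    (hφ : IsCSmoothOn V φ) {k : ℕ} (Γ : Fin (k + 1) → OneParam G) (x : G) (u : ℝ)
    (hx : x * (Γ (Fin.last k)).1 u ∈ V) :
    HasSlopeLimitAt
      (fun u' => iteratedDOn V φ k (fun i => Γ i.castSucc) (x * (Γ (Fin.last k)).1 u'))
      (iteratedDOn V φ (k + 1) Γ (x * (Γ (Fin.last k)).1 u)) u := by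
  have hc : ContinuousAt (fun t => x * (Γ (Fin.last k)).1 u * (Γ (Fin.last k)).1 t) 0 := by
    fun_prop
  have hmem : ∀ᶠ t in 𝓝[≠] (0 : ℝ), x * (Γ (Fin.last k)).1 u * (Γ (Fin.last k)).1 t ∈ V :=
    (hc.eventually_mem (hV.mem_nhds (by simpa [OneParam.map_zero] using hx))).filter_mono
      nhdsWithin_le_nhds
  refine ((hφ.2 k).1 Γ _ hx).congr' (hmem.mono fun t ht => ?_)
  rw [if_pos ht]
  dsimp only
  rw [(Γ (Fin.last k)).2 u t, mul_assoc]

theorem continuousAt_iteratedDOn_dirDerivOn_conj (hV : IsOpen V) (hφ : IsCSmoothOn V φ)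
    (η : OneParam G) {k : ℕ} (δ : Fin k → OneParam G) (ζ : OneParam G) {x : G} {s : ℝ}
    (hxs : x * η.1 s ∈ V) :
    ContinuousAt (fun q : ℝ × ℝ => iteratedDOn V (dirDerivOn V φ η) k
      (fun i => (δ i).conj (η.1 q.2)) (x * ζ.1 q.1 * η.1 q.2)) ((0 : ℝ), s) := by
  simp only [← iteratedDOn_cons]
  refine ((hφ.continuousOn_iteratedDOn (k + 1)).continuousAt
    ((isOpen_univ.prod hV).mem_nhds ⟨trivial, ?_⟩)).comp (f := fun q : ℝ × ℝ =>
      ((Fin.cons η fun i => (δ i).conj (η.1 q.2) : Fin (k + 1) → OneParam G),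
        x * ζ.1 q.1 * η.1 q.2)) ?_
  · simpa [OneParam.map_zero] using hxs
  · refine (Continuous.prodMk ?_ (by fun_prop)).continuousAt
    exact continuous_const.finCons (continuous_pi fun i => continuous_conj.comp
      (continuous_const.prodMk (η.1.continuous.comp continuous_snd)))

variable [IsTopologicalAddGroup Y] [ContinuousSMul ℝ Y] [PolynormableSpace ℝ Y]

theorem hasSlopeLimitAt_conj (hV : IsOpen V) (hφ : IsCSmoothOn V φ) (η : OneParam G) :
    ∀ {k : ℕ} (δ : Fin k → OneParam G) (x : G) (s : ℝ), x * η.1 s ∈ V →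
      HasSlopeLimitAt (fun s' => iteratedDOn V φ k (fun i => (δ i).conj (η.1 s')) (x * η.1 s'))
        (iteratedDOn V (dirDerivOn V φ η) k (fun i => (δ i).conj (η.1 s)) (x * η.1 s)) s := by
  intro k
  induction k with
  | zero =>
    intro _ x s hxs
    exact hφ.hasSlopeLimitAt_iteratedDOn hV (fun _ : Fin 1 => η) x s hxs
  | succ k ih =>
    intro δ x s hxs
    -- Since `x η(s') · (ζ.conj (η s'))(u) = x ζ(u) η(s')`, both derivatives are partial derivatives
    -- of `(u, s') ↦ D^k φ (x ζ(u) η(s'))`, which the mixed-partial lemma exchanges.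
    set ζ := δ (Fin.last k)
    have hN : {q : ℝ × ℝ | x * ζ.1 q.1 * η.1 q.2 ∈ V} ∈ 𝓝 ((0 : ℝ), s) :=
      (hV.preimage (by fun_prop)).mem_nhds (by simpa [OneParam.map_zero] using hxs)
    have key := hasSlopeLimitAt_of_mixed_partial
      (f := fun u s' => iteratedDOn V φ k (fun i => (δ i.castSucc).conj (η.1 s'))
        (x * ζ.1 u * η.1 s'))
      (f₁ := fun s' => iteratedDOn V φ (k + 1) (fun i => (δ i).conj (η.1 s')) (x * η.1 s'))
      (f₂ := fun u s' => iteratedDOn V (dirDerivOn V φ η) k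
        (fun i => (δ i.castSucc).conj (η.1 s')) (x * ζ.1 u * η.1 s'))
      (f₁₂ := fun u s' => iteratedDOn V (dirDerivOn V φ η) (k + 1)
        (fun i => (δ i).conj (η.1 s')) (x * ζ.1 u * η.1 s'))
      ?_ ?_ ?_ (hφ.continuousAt_iteratedDOn_dirDerivOn_conj hV η δ ζ hxs)
    · simpa only [OneParam.map_zero, mul_one] using key
    · have hline : ∀ᶠ s' in 𝓝 s, x * η.1 s' ∈ V :=
        (continuous_const.mul η.1.continuous).continuousAt.eventually_mem (hV.mem_nhds hxs)
      filter_upwards [hline] with s' hs'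
      have := hφ.hasSlopeLimitAt_iteratedDOn hV (fun i => (δ i).conj (η.1 s')) (x * η.1 s') 0
        (by simpa [OneParam.map_zero] using hs')
      simpa only [mul_mul_conj_apply, OneParam.map_zero, mul_one] using this
    · filter_upwards [hN] with q hq
      exact ih (fun i => δ i.castSucc) (x * ζ.1 q.1) q.2 hq
    · filter_upwards [hN] with q hq
      have := hφ.hasSlopeLimitAt_iteratedDOn hV
        (Fin.cons η fun i => (δ i).conj (η.1 q.2)) (x * η.1 q.2) q.1
        (by simpa only [Fin.cons_last, mul_mul_conj_apply] using hq)
      simpa only [Fin.init_cons, Fin.cons_last, iteratedDOn_cons, mul_mul_conj_apply] using this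

theorem tendsto_rightQuot_of_eq (hV : IsOpen V) (hφ : IsCSmoothOn V φ) {k : ℕ}
    (hk : ∀ (γ : Fin k → OneParam G) (g : G), g ∈ V →
      iteratedRDOn V φ k γ g = iteratedDOn V φ k (rightToLeft g γ) g)
    (γ : Fin (k + 1) → OneParam G) {g : G} (hg : g ∈ V) :
    Tendsto (fun t : ℝ =>
        if (γ (Fin.last k)).1 (-t) * g ∈ V then
          t⁻¹ • (iteratedRDOn V φ k (fun i => γ i.castSucc) ((γ (Fin.last k)).1 (-t) * g)
            - iteratedRDOn V φ k (fun i => γ i.castSucc) g)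
        else 0)
      (𝓝[≠] 0) (𝓝 (iteratedDOn V φ (k + 1) (rightToLeft g γ) g)) := by
  set η := (γ (Fin.last k)).reverse.conj g
  have hshift : ∀ t, (γ (Fin.last k)).1 (-t) * g = g * η.1 t := fun t => by
    simp only [η, conj_apply, reverse_apply]
    group
  have hmem : ∀ᶠ t in 𝓝[≠] (0 : ℝ), (γ (Fin.last k)).1 (-t) * g ∈ V :=
    ((Continuous.continuousAt (by fun_prop)).eventually_mem
      (hV.mem_nhds (by simpa [OneParam.map_zero] using hg))).filter_mono nhdsWithin_le_nhds
  have hE := hφ.hasSlopeLimitAt_conj hV η (rightToLeft g fun i => γ i.castSucc) g 0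
    (by simpa [OneParam.map_zero] using hg)
  simp only [HasSlopeLimitAt, zero_add, OneParam.map_zero, mul_one, conj_one] at hE
  rw [rightToLeft_succ, iteratedDOn_cons]
  refine hE.congr' (hmem.mono fun t ht => ?_)
  dsimp only
  rw [if_pos ht, hk _ _ ht, hk _ _ hg, hshift, rightToLeft_mul]

theorem iteratedRDOn_eq [T2Space Y] (hV : IsOpen V) (hφ : IsCSmoothOn V φ) :
    ∀ {k : ℕ} (γ : Fin k → OneParam G) (g : G), g ∈ V →
      iteratedRDOn V φ k γ g = iteratedDOn V φ k (rightToLeft g γ) g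
  | 0, _, _, _ => rfl
  | _ + 1, γ, _, hg => (hφ.tendsto_rightQuot_of_eq hV (hφ.iteratedRDOn_eq hV) γ hg).limUnder_eq

theorem tendsto_rightQuot [T2Space Y] (hV : IsOpen V) (hφ : IsCSmoothOn V φ) {k : ℕ}
    (γ : Fin (k + 1) → OneParam G) {g : G} (hg : g ∈ V) :
    Tendsto (fun t : ℝ =>
        if (γ (Fin.last k)).1 (-t) * g ∈ V then
          t⁻¹ • (iteratedRDOn V φ k (fun i => γ i.castSucc) ((γ (Fin.last k)).1 (-t) * g)
            - iteratedRDOn V φ k (fun i => γ i.castSucc) g)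
        else 0)
      (𝓝[≠] 0) (𝓝 (iteratedRDOn V φ (k + 1) γ g)) := by
  rw [hφ.iteratedRDOn_eq hV γ g hg]
  exact hφ.tendsto_rightQuot_of_eq hV (hφ.iteratedRDOn_eq hV) γ hg

end RightDerivatives

end IsCSmoothOn

section Seminorms

variable {G : Type*} [TopologicalSpace G] [Group G]
variable {Y : Type*} [TopologicalSpace Y] [AddCommGroup Y] [Module ℝ Y]
variable {V : Set G} {k : ℕ} {K₁ : Set (Fin k → OneParam G)} {K₂ : Set G} {ν : Seminorm ℝ Y}

theorem leftSemiOn_nonneg (φ : G → Y) : 0 ≤ leftSemiOn V k K₁ K₂ ν φ :=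
  Real.sSup_nonneg (by rintro _ ⟨q, -, rfl⟩; exact apply_nonneg ν _)

theorem rightSemiOn_nonneg (φ : G → Y) : 0 ≤ rightSemiOn V k K₁ K₂ ν φ :=
  Real.sSup_nonneg (by rintro _ ⟨q, -, rfl⟩; exact apply_nonneg ν _)

theorem IsCSmoothOn.bddAbove_leftSemi {φ : G → Y} (hφ : IsCSmoothOn V φ) (hK₁ : IsCompact K₁)
    (hK₂ : IsCompact K₂) (hK₂V : K₂ ⊆ V) (hν : Continuous ν) :
    BddAbove ((fun q : (Fin k → OneParam G) × G => ν (iteratedDOn V φ k q.1 q.2)) '' (K₁ ×ˢ K₂)) :=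
  ((hK₁.prod hK₂).image_of_continuousOn (hν.comp_continuousOn
    ((hφ.continuousOn_iteratedDOn k).mono (Set.prod_mono (Set.subset_univ _) hK₂V)))).bddAbove

variable [IsTopologicalGroup G] [IsTopologicalAddGroup Y] [ContinuousSMul ℝ Y]
  [PolynormableSpace ℝ Y] [T2Space Y]

open OneParam

theorem IsCSmoothOn.image_rightSemi_subset {φ : G → Y} (hV : IsOpen V) (hφ : IsCSmoothOn V φ)
    (hK₂V : K₂ ⊆ V) :
    (fun q : (Fin k → OneParam G) × G => ν (iteratedRDOn V φ k q.1 q.2)) '' (K₁ ×ˢ K₂) ⊆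
      (fun q : (Fin k → OneParam G) × G => ν (iteratedDOn V φ k q.1 q.2)) ''
        (((fun q : (Fin k → OneParam G) × G => rightToLeft q.2 q.1) '' (K₁ ×ˢ K₂)) ×ˢ K₂) := by
  rintro _ ⟨⟨γ, g⟩, hq, rfl⟩
  exact ⟨(rightToLeft g γ, g), ⟨Set.mem_image_of_mem _ hq, hq.2⟩,
    by dsimp only; rw [hφ.iteratedRDOn_eq hV γ g (hK₂V hq.2)]⟩

theorem IsCSmoothOn.image_leftSemi_subset {φ : G → Y} (hV : IsOpen V) (hφ : IsCSmoothOn V φ)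
    (hK₂V : K₂ ⊆ V) :
    (fun q : (Fin k → OneParam G) × G => ν (iteratedDOn V φ k q.1 q.2)) '' (K₁ ×ˢ K₂) ⊆
      (fun q : (Fin k → OneParam G) × G => ν (iteratedRDOn V φ k q.1 q.2)) ''
        (((fun q : (Fin k → OneParam G) × G => rightToLeft q.2⁻¹ q.1) '' (K₁ ×ˢ K₂)) ×ˢ K₂) := by
  rintro _ ⟨⟨μ, g⟩, hq, rfl⟩
  exact ⟨(rightToLeft g⁻¹ μ, g), ⟨Set.mem_image_of_mem _ hq, hq.2⟩,
    by dsimp only; rw [hφ.iteratedRDOn_eq hV _ g (hK₂V hq.2), rightToLeft_rightToLeft_inv]⟩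

theorem IsCSmoothOn.bddAbove_rightSemi {φ : G → Y} (hV : IsOpen V) (hφ : IsCSmoothOn V φ)
    (hK₁ : IsCompact K₁) (hK₂ : IsCompact K₂) (hK₂V : K₂ ⊆ V) (hν : Continuous ν) :
    BddAbove ((fun q : (Fin k → OneParam G) × G => ν (iteratedRDOn V φ k q.1 q.2)) ''
      (K₁ ×ˢ K₂)) :=
  (hφ.bddAbove_leftSemi ((hK₁.prod hK₂).image continuous_rightToLeft) hK₂ hK₂V hν).mono
    (hφ.image_rightSemi_subset hV hK₂V)

theorem IsCSmoothOn.rightSemiOn_le_leftSemiOn {φ : G → Y} (hV : IsOpen V)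
    (hφ : IsCSmoothOn V φ) (hK₁ : IsCompact K₁) (hK₂ : IsCompact K₂) (hK₂V : K₂ ⊆ V)
    (hν : Continuous ν) :
    rightSemiOn V k K₁ K₂ ν φ ≤ leftSemiOn V k
      ((fun q : (Fin k → OneParam G) × G => rightToLeft q.2 q.1) '' (K₁ ×ˢ K₂)) K₂ ν φ :=
  Real.sSup_le_sSup_of_subset (hφ.image_rightSemi_subset hV hK₂V)
    (hφ.bddAbove_leftSemi ((hK₁.prod hK₂).image continuous_rightToLeft) hK₂ hK₂V hν)
    (by rintro _ ⟨q, -, rfl⟩; exact apply_nonneg ν _)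

theorem IsCSmoothOn.leftSemiOn_le_rightSemiOn {φ : G → Y} (hV : IsOpen V)
    (hφ : IsCSmoothOn V φ) (hK₁ : IsCompact K₁) (hK₂ : IsCompact K₂) (hK₂V : K₂ ⊆ V)
    (hν : Continuous ν) :
    leftSemiOn V k K₁ K₂ ν φ ≤ rightSemiOn V k
      ((fun q : (Fin k → OneParam G) × G => rightToLeft q.2⁻¹ q.1) '' (K₁ ×ˢ K₂)) K₂ ν φ :=
  Real.sSup_le_sSup_of_subset (hφ.image_leftSemi_subset hV hK₂V)
    (hφ.bddAbove_rightSemi hV ((hK₁.prod hK₂).image continuous_rightToLeft_inv) hK₂ hK₂V hν)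
    (by rintro _ ⟨q, -, rfl⟩; exact apply_nonneg ν _)

end Seminorms

/-- The seminorms `q_{K₁,K₂}` built from right directional derivatives are well defined on
`C^∞(V, Y)` (the iterated right derivatives of a smooth function exist at every point of
`V`, and the suprema over compacta are finite), and they determine the same locally convex
topology on `C^∞(V, Y)` as the seminorms `p_{K₁,K₂}` built from the left directional
derivatives: a filter converges w.r.t. the `p`-seminorms iff it converges w.r.t. the
`q`-seminorms. -/
theorem rightSeminorms_wellDefined_and_determine_same_topology
    (G : Type*) [TopologicalSpace G] [Group G] [IsTopologicalGroup G]
    (Y : Type*) [TopologicalSpace Y] [AddCommGroup Y] [Module ℝ Y]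
    [IsTopologicalAddGroup Y] [ContinuousSMul ℝ Y] [LocallyConvexSpace ℝ Y] [T2Space Y]
    (V : Set G) (hV : IsOpen V) :
    (∀ φ : G → Y, IsCSmoothOn V φ →
      ∀ (k : ℕ) (γ : Fin (k + 1) → OneParam G), ∀ g ∈ V,
        Filter.Tendsto (fun t : ℝ =>
            if (γ (Fin.last k)).1 (-t) * g ∈ V then
              t⁻¹ • (iteratedRDOn V φ k (fun i => γ i.castSucc) ((γ (Fin.last k)).1 (-t) * g)
                - iteratedRDOn V φ k (fun i => γ i.castSucc) g)
            else 0)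
          (𝓝[≠] (0 : ℝ)) (𝓝 (iteratedRDOn V φ (k + 1) γ g))) ∧
    (∀ φ : G → Y, IsCSmoothOn V φ →
      ∀ (k : ℕ) (K₁ : Set (Fin k → OneParam G)) (K₂ : Set G) (ν : Seminorm ℝ Y),
        IsCompact K₁ → IsCompact K₂ → K₂ ⊆ V → Continuous ν →
        BddAbove ((fun q : (Fin k → OneParam G) × G =>
          ν (iteratedRDOn V φ k q.1 q.2)) '' (K₁ ×ˢ K₂))) ∧
    (∀ (F : Filter {φ : G → Y // IsCSmoothOn V φ}) (f : {φ : G → Y // IsCSmoothOn V φ}),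
      (∀ (k : ℕ) (K₁ : Set (Fin k → OneParam G)) (K₂ : Set G) (ν : Seminorm ℝ Y),
          IsCompact K₁ → IsCompact K₂ → K₂ ⊆ V → Continuous ν →
          Filter.Tendsto (fun g : {φ : G → Y // IsCSmoothOn V φ} =>
            leftSemiOn V k K₁ K₂ ν (g.1 - f.1)) F (𝓝 (0 : ℝ)))
        ↔
      (∀ (k : ℕ) (K₁ : Set (Fin k → OneParam G)) (K₂ : Set G) (ν : Seminorm ℝ Y),
          IsCompact K₁ → IsCompact K₂ → K₂ ⊆ V → Continuous ν →
          Filter.Tendsto (fun g : {φ : G → Y // IsCSmoothOn V φ} =>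
            rightSemiOn V k K₁ K₂ ν (g.1 - f.1)) F (𝓝 (0 : ℝ)))) := by
  refine ⟨fun φ hφ k γ g hg => hφ.tendsto_rightQuot hV γ hg,
    fun φ hφ k K₁ K₂ ν hK₁ hK₂ hK₂V hν => hφ.bddAbove_rightSemi hV hK₁ hK₂ hK₂V hν,
    fun F f => ⟨fun hleft k K₁ K₂ ν hK₁ hK₂ hK₂V hν => ?_,
      fun hright k K₁ K₂ ν hK₁ hK₂ hK₂V hν => ?_⟩⟩
  · exact squeeze_zero (fun _ => rightSemiOn_nonneg _)
      (fun ψ => (ψ.2.sub f.2).rightSemiOn_le_leftSemiOn hV hK₁ hK₂ hK₂V hν)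
      (hleft k _ K₂ ν ((hK₁.prod hK₂).image OneParam.continuous_rightToLeft) hK₂ hK₂V hν)
  · exact squeeze_zero (fun _ => leftSemiOn_nonneg _)
      (fun ψ => (ψ.2.sub f.2).leftSemiOn_le_rightSemiOn hV hK₁ hK₂ hK₂V hν)
      (hright k _ K₂ ν ((hK₁.prod hK₂).image OneParam.continuous_rightToLeft_inv) hK₂ hK₂V hν)

end
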